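/- arXiv:2505.03231 — 4 statements merged into one kernel-verified Lean document; each statement's English description precedes it below -/
import Mathlib

section
/- Let n ≥ 1, 1 ≤ k ≤ n, and let λ ∈ Γ_k with λ_1 ≥ λ_2 ≥ … ≥ λ_n. Then σ_{k-1;n}(λ) ≥ σ_{k-1;n-1}(λ) ≥ … ≥ σ_{k-1;1}(λ) > 0. -/
noncomputable section

open Finset Polynomial

/-- The j-th elementary symmetric polynomial of a vector in ℝⁿ. -/
def elemSym (n j : ℕ) (l : Fin n → ℝ) : ℝ :=
  ∑ s ∈ (Finset.univ : Finset (Fin n)).powersetCard j, ∏ i ∈ s, l i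

/-- The Gårding cone Γ_k ⊂ ℝⁿ. -/
def GardingCone (n k : ℕ) : Set (Fin n → ℝ) :=
  {l | ∀ j, 1 ≤ j → j ≤ k → 0 < elemSym n j l}

lemma elemSym_zero (n : ℕ) (l : Fin n → ℝ) : elemSym n 0 l = 1 := by
  simp [elemSym]

lemma elemSym_update (n j : ℕ) (l : Fin n → ℝ) (i : Fin n) :
    elemSym n j (Function.update l i 0) =
      ∑ s ∈ (Finset.univ.erase i).powersetCard j, ∏ t ∈ s, l t := by
  unfold elemSym
  rw [← Finset.sum_filter_add_sum_filter_not _ (fun s => i ∈ s)]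
  have h1 : ∑ s ∈ (Finset.univ.powersetCard j).filter (fun s => i ∈ s),
      ∏ t ∈ s, Function.update l i 0 t = 0 := by
    refine Finset.sum_eq_zero fun s hs => ?_
    exact Finset.prod_eq_zero (Finset.mem_filter.1 hs).2 (Function.update_self i 0 l)
  rw [h1, zero_add]
  have h2 : (Finset.univ.powersetCard j).filter (fun s => ¬ i ∈ s)
      = (Finset.univ.erase i).powersetCard j := by
    ext s
    simp only [Finset.mem_filter, Finset.mem_powersetCard, Finset.subset_erase]
    tauto
  rw [h2]
  refine Finset.sum_congr rfl fun s hs => Finset.prod_congr rfl fun t ht => ?_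
  have : t ≠ i := by
    rw [Finset.mem_powersetCard] at hs
    exact Finset.ne_of_mem_erase (hs.1 ht)
  exact Function.update_of_ne this 0 l

lemma elemSym_split (n j : ℕ) (hj : 1 ≤ j) (l : Fin n → ℝ) (i : Fin n) :
    elemSym n j l = elemSym n j (Function.update l i 0)
      + l i * elemSym n (j - 1) (Function.update l i 0) := by
  obtain ⟨j', rfl⟩ : ∃ j', j = j' + 1 := ⟨j - 1, (Nat.succ_pred_eq_of_pos hj).symm⟩
  rw [elemSym_update, elemSym_update]
  simp only [Nat.add_sub_cancel]
  have key : (Finset.univ : Finset (Fin n)).powersetCard (j'+1)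
      = (Finset.univ.erase i).powersetCard (j'+1)
        ∪ ((Finset.univ.erase i).powersetCard j').image (insert i) := by
    rw [← Finset.powersetCard_succ_insert (Finset.notMem_erase i _),
      Finset.insert_erase (Finset.mem_univ i)]
  unfold elemSym
  rw [key, Finset.sum_union]
  · congr 1
    rw [Finset.sum_image]
    · rw [Finset.mul_sum]
      refine Finset.sum_congr rfl fun s hs => ?_
      have his : i ∉ s := fun h => Finset.notMem_erase i _
        ((Finset.mem_powersetCard.1 hs).1 h)
      rw [Finset.prod_insert his]
    · intro s hs t ht hst
      have his : i ∉ s := fun h => Finset.notMem_erase i _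
        ((Finset.mem_powersetCard.1 hs).1 h)
      have hit : i ∉ t := fun h => Finset.notMem_erase i _
        ((Finset.mem_powersetCard.1 ht).1 h)
      rw [← Finset.erase_insert his, ← Finset.erase_insert hit, hst]
  · rw [Finset.disjoint_left]
    intro s hs hs'
    have his : i ∉ s := fun h => Finset.notMem_erase i _
      ((Finset.mem_powersetCard.1 hs).1 h)
    obtain ⟨t, ht, rfl⟩ := Finset.mem_image.1 hs'
    exact his (Finset.mem_insert_self i t)

/-- the polynomial ∏ (X + l i) -/
def symPoly (n : ℕ) (l : Fin n → ℝ) : ℝ[X] := ∏ i : Fin n, (X + C (l i))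

lemma symPoly_monic (n : ℕ) (l : Fin n → ℝ) : (symPoly n l).Monic :=
  monic_prod_of_monic _ _ fun i _ => monic_X_add_C (l i)

lemma symPoly_natDegree (n : ℕ) (l : Fin n → ℝ) : (symPoly n l).natDegree = n := by
  unfold symPoly
  rw [Polynomial.natDegree_prod]
  · simp [natDegree_X_add_C]
  · intro i _; exact (monic_X_add_C (l i)).ne_zero

lemma symPoly_coeff (n j : ℕ) (hj : j ≤ n) (l : Fin n → ℝ) :
    (symPoly n l).coeff (n - j) = elemSym n j l := by
  unfold symPoly elemSym
  rw [Finset.prod_X_add_C_coeff]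
  · congr 2
    simp [Nat.sub_sub_self hj]
  · simp [Nat.sub_le]

lemma symPoly_coeff' (n q : ℕ) (hq : q ≤ n) (l : Fin n → ℝ) :
    (symPoly n l).coeff q = elemSym n (n - q) l := by
  have := symPoly_coeff n (n - q) (Nat.sub_le n q) l
  rwa [Nat.sub_sub_self hq] at this

lemma symPoly_shift (n : ℕ) (l : Fin n → ℝ) (t : ℝ) :
    symPoly n (fun i => l i + t) = (symPoly n l).comp (X + C t) := by
  unfold symPoly
  rw [Polynomial.prod_comp]
  refine Finset.prod_congr rfl fun i _ => ?_
  rw [Polynomial.add_comp, Polynomial.X_comp, Polynomial.C_comp, map_add, add_assoc,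
    add_comm (C (l i)) (C t)]

lemma GardingCone_shift (n k : ℕ) (hk : 1 ≤ k) (hkn : k ≤ n) (l : Fin n → ℝ)
    (hl : l ∈ GardingCone n k) (t : ℝ) (ht : 0 ≤ t) :
    (fun i => l i + t) ∈ GardingCone n k := by
  intro j hj hjk
  have hjn : j ≤ n := hjk.trans hkn
  have hcoeff : elemSym n j (fun i => l i + t)
      = ((symPoly n l).hasseDeriv (n - j)).eval t := by
    rw [← symPoly_coeff n j hjn, symPoly_shift, ← Polynomial.taylor_apply,
      Polynomial.taylor_coeff]
  rw [hcoeff]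
  have hdeg : ((symPoly n l).hasseDeriv (n - j)).natDegree < j + 1 := by
    have := Polynomial.natDegree_hasseDeriv_le (symPoly n l) (n - j)
    rw [symPoly_natDegree] at this
    omega
  rw [Polynomial.eval_eq_sum_range' hdeg]
  have hterm : ∀ r, r ≤ j → ((symPoly n l).hasseDeriv (n - j)).coeff r
      = (r + (n - j)).choose (n - j) * elemSym n (j - r) l := by
    intro r hr
    rw [Polynomial.hasseDeriv_coeff, symPoly_coeff' n (r + (n - j)) (by omega)]
    congr 2
    omega
  refine Finset.sum_pos' (fun r hr => ?_) ⟨0, by simp, ?_⟩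
  · rw [Finset.mem_range] at hr
    rw [hterm r (by omega)]
    have h1 : (0:ℝ) ≤ elemSym n (j - r) l := by
      rcases Nat.eq_zero_or_pos (j - r) with h | h
      · rw [h]; simp [elemSym]
      · exact le_of_lt (hl _ h (by omega))
    positivity
  · rw [hterm 0 (by omega)]
    simp only [Nat.zero_add, Nat.choose_self, Nat.cast_one, one_mul, Nat.sub_zero, pow_zero,
      mul_one]
    exact hl j hj hjk

lemma sum_powersetCard_one {ι : Type*} [DecidableEq ι] (s : Finset ι) (u : ι → ℝ) :
    ∑ T ∈ s.powersetCard 1, ∏ i ∈ T, u i = ∑ i ∈ s, u i := by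
  rw [Finset.powersetCard_one, Finset.sum_map]
  simp

lemma sq_sum_eq {ι : Type*} [DecidableEq ι] (s : Finset ι) (u : ι → ℝ) :
    (∑ i ∈ s, u i) ^ 2 = ∑ i ∈ s, (u i) ^ 2
      + 2 * ∑ T ∈ s.powersetCard 2, ∏ i ∈ T, u i := by
  induction s using Finset.induction_on with
  | empty =>
    have h : (∅ : Finset ι).powersetCard 2 = ∅ := by
      ext T
      simp only [Finset.mem_powersetCard, Finset.subset_empty, Finset.notMem_empty, iff_false]
      rintro ⟨rfl, h⟩; simp at h
    simp [h]
  | @insert a s ha ih =>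
    rw [Finset.sum_insert ha, Finset.sum_insert ha,
      show (2:ℕ) = 1 + 1 from rfl, Finset.powersetCard_succ_insert ha, Finset.sum_union, Finset.sum_image]
    · have h1 : ∑ T ∈ s.powersetCard 1, ∏ i ∈ insert a T, u i
          = u a * ∑ i ∈ s, u i := by
        rw [← sum_powersetCard_one s u, Finset.mul_sum]
        refine Finset.sum_congr rfl fun T hT => ?_
        have haT : a ∉ T := fun h => ha ((Finset.mem_powersetCard.1 hT).1 h)
        rw [Finset.prod_insert haT]
      rw [h1]
      ring_nf
      linarith [ih]
    · intro x hx y hy hxy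
      have hax : a ∉ x := fun h => ha ((Finset.mem_powersetCard.1 hx).1 h)
      have hay : a ∉ y := fun h => ha ((Finset.mem_powersetCard.1 hy).1 h)
      rw [← Finset.erase_insert hax, ← Finset.erase_insert hay, hxy]
    · rw [Finset.disjoint_left]
      intro T hT hT'
      obtain ⟨x, hx, rfl⟩ := Finset.mem_image.1 hT'
      exact (fun h => ha ((Finset.mem_powersetCard.1 hT).1 h)) (Finset.mem_insert_self a x)

lemma elemSym_top (k : ℕ) (v : Fin k → ℝ) : elemSym k k v = ∏ i, v i := by
  unfold elemSym
  have h := Finset.powersetCard_self (Finset.univ : Finset (Fin k))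
  rw [Finset.card_univ, Fintype.card_fin] at h
  rw [h, Finset.sum_singleton]

lemma elemSym_complement (k j : ℕ) (hj : j ≤ k) (v : Fin k → ℝ) (hv : ∀ i, v i ≠ 0) :
    elemSym k (k - j) v = (∏ i, v i) * elemSym k j (fun i => (v i)⁻¹) := by
  unfold elemSym
  rw [Finset.mul_sum]
  refine Finset.sum_nbij' (fun S => Finset.univ \ S) (fun S => Finset.univ \ S) ?_ ?_ ?_ ?_ ?_
  · intro S hS
    rw [Finset.mem_powersetCard_univ] at hS ⊢
    rw [Finset.card_univ_diff, hS, Fintype.card_fin]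
    omega
  · intro S hS
    rw [Finset.mem_powersetCard_univ] at hS ⊢
    rw [Finset.card_univ_diff, hS, Fintype.card_fin]
  · intro S _; simp [sdiff_sdiff_right_self, Finset.inf_eq_inter]
  · intro S _; simp [sdiff_sdiff_right_self, Finset.inf_eq_inter]
  · intro S hS
    have h1 : (∏ i ∈ Finset.univ \ S, v i) * ∏ i ∈ S, v i = ∏ i, v i :=
      Finset.prod_sdiff (Finset.subset_univ S)
    have h2 : ∏ i ∈ Finset.univ \ S, (v i)⁻¹ = (∏ i ∈ Finset.univ \ S, v i)⁻¹ := by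
      rw [← Finset.prod_inv_distrib]
    have h3 : (∏ i ∈ Finset.univ \ S, v i) ≠ 0 :=
      Finset.prod_ne_zero_iff.2 fun i _ => hv i
    rw [h2, ← h1, mul_comm (∏ i ∈ Finset.univ \ S, v i) (∏ i ∈ S, v i), mul_assoc,
      mul_inv_cancel₀ h3, mul_one]

lemma newton_sign_fn (k : ℕ) (hk : 2 ≤ k) (v : Fin k → ℝ)
    (h1 : elemSym k (k - 1) v = 0) :
    elemSym k (k - 2) v * elemSym k k v ≤ 0 := by
  by_cases hz : ∃ i, v i = 0
  · obtain ⟨i, hi⟩ := hz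
    rw [elemSym_top, Finset.prod_eq_zero (Finset.mem_univ i) hi, mul_zero]
  · push_neg at hz
    set u : Fin k → ℝ := fun i => (v i)⁻¹ with hu
    have hprodne : (∏ i, v i) ≠ 0 := Finset.prod_ne_zero_iff.2 fun i _ => hz i
    have hsum : ∑ i, u i = 0 := by
      have hc1 := elemSym_complement k 1 (by omega) v hz
      rw [h1] at hc1
      have h1' : elemSym k 1 u = ∑ i, u i := sum_powersetCard_one Finset.univ u
      rw [h1'] at hc1
      rcases mul_eq_zero.1 hc1.symm with h | h
      · exact absurd h hprodne
      · exact h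
    have he2 : elemSym k 2 u ≤ 0 := by
      have hss := sq_sum_eq (Finset.univ : Finset (Fin k)) u
      rw [hsum] at hss
      have hsq : (0:ℝ) ≤ ∑ i, (u i) ^ 2 := Finset.sum_nonneg fun i _ => sq_nonneg _
      have he : elemSym k 2 u = ∑ T ∈ Finset.univ.powersetCard 2, ∏ i ∈ T, u i := rfl
      nlinarith [hss, hsq, he]
    have hc2 := elemSym_complement k 2 hk v hz
    rw [hc2, elemSym_top]
    nlinarith [sq_nonneg (∏ i, v i), he2]

lemma newton_sign_multiset (s : Multiset ℝ) (hk : 2 ≤ Multiset.card s)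
    (h1 : s.esymm (Multiset.card s - 1) = 0) :
    s.esymm (Multiset.card s - 2) * s.esymm (Multiset.card s) ≤ 0 := by
  obtain ⟨L, rfl⟩ := Quotient.exists_rep s
  have hq : (⟦L⟧ : Multiset ℝ) = (↑L : Multiset ℝ) := rfl
  rw [hq] at hk h1 ⊢
  have hrw : ∀ j, (↑L : Multiset ℝ).esymm j = elemSym L.length j L.get := by
    intro j
    have hL : (↑L : Multiset ℝ) = Multiset.map L.get (Finset.univ.val) := by
      rw [Fin.univ_def]
      show (↑L : Multiset ℝ) = Multiset.map L.get (↑(List.finRange L.length))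
      rw [Multiset.map_coe, List.map_get_finRange]
    rw [hL, Finset.esymm_map_val]
    rfl
  have hcard : Multiset.card (↑L : Multiset ℝ) = L.length := rfl
  rw [hcard] at hk h1 ⊢
  rw [hrw] at h1 ⊢
  rw [hrw]
  exact newton_sign_fn L.length hk L.get h1

lemma symPoly_roots (n : ℕ) (w : Fin n → ℝ) :
    (symPoly n w).roots = Finset.univ.val.map (fun i => -(w i)) := by
  have h1 : symPoly n w = ((Finset.univ.val.map (fun i => -(w i))).map
      (fun a => X - C a)).prod := by
    rw [Multiset.map_map]
    unfold symPoly
    rw [Finset.prod_eq_multiset_prod]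
    congr 1
    refine Multiset.map_congr rfl fun i _ => ?_
    simp [sub_neg_eq_add]
  rw [h1, Polynomial.roots_multiset_prod_X_sub_C]

lemma newton_special (n k : ℕ) (hk : 2 ≤ k) (hkn : k ≤ n) (w : Fin n → ℝ)
    (h1 : elemSym n (k - 1) w = 0) (h2 : 0 < elemSym n (k - 2) w) :
    elemSym n k w ≤ 0 := by
  have hdf : ∀ a b : ℕ, b ≤ a → (0:ℝ) < (a.descFactorial b : ℝ) := by
    intro a b h
    have hne : a.descFactorial b ≠ 0 := fun hc =>
      absurd (Nat.descFactorial_eq_zero_iff_lt.1 hc) (by omega)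
    exact_mod_cast Nat.pos_of_ne_zero hne
  set m := n - k with hm
  set f := symPoly n w with hf
  set g := derivative^[m] f with hg
  have hfdeg : f.natDegree = n := symPoly_natDegree n w
  have hfroots : Multiset.card f.roots = n := by
    rw [symPoly_roots]; simp
  have hgcoeff : ∀ r, g.coeff r = ((r + m).descFactorial m : ℝ) * f.coeff (r + m) := by
    intro r
    rw [hg, Polynomial.coeff_iterate_derivative, nsmul_eq_mul]
  have hcoefftop : g.coeff k = (n.descFactorial m : ℝ) := by
    rw [hgcoeff, show k + m = n by omega, ← hfdeg, (symPoly_monic n w).coeff_natDegree]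
    rw [hfdeg, mul_one]
  have hLpos : (0:ℝ) < (n.descFactorial m : ℝ) := by
    exact hdf n m (by omega)
  have hgdeg : g.natDegree = k := by
    apply le_antisymm
    · rw [Polynomial.natDegree_le_iff_coeff_eq_zero]
      intro r hr
      rw [hgcoeff, Polynomial.coeff_eq_zero_of_natDegree_lt (by omega : f.natDegree < r + m),
        mul_zero]
    · exact Polynomial.le_natDegree_of_ne_zero (by rw [hcoefftop]; exact ne_of_gt hLpos)
  have hgroots : Multiset.card g.roots = k := by
    have hle : Multiset.card g.roots ≤ k := hgdeg ▸ g.card_roots'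
    have hge : ∀ j, n ≤ Multiset.card (derivative^[j] f).roots + j := by
      intro j
      induction j with
      | zero => simp [hfroots]
      | succ j ih =>
        have hd := Polynomial.card_roots_le_derivative (derivative^[j] f)
        rw [Function.iterate_succ_apply' derivative j f]
        omega
    have := hge m
    rw [← hg] at this
    omega
  have hvieta : ∀ r, r ≤ k → g.coeff r
      = (n.descFactorial m : ℝ) * (-1) ^ (k - r) * g.roots.esymm (k - r) := by
    intro r hr
    have := Polynomial.coeff_eq_esymm_roots_of_card
      (p := g) (by rw [hgroots, hgdeg]) (k := r) (by rw [hgdeg]; exact hr)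
    rwa [hgdeg, Polynomial.leadingCoeff, hgdeg, hcoefftop] at this
  -- identify coefficients with elemSym
  have hc : ∀ r, r ≤ 2 → g.coeff r = ((r + m).descFactorial m : ℝ) * elemSym n (k - r) w := by
    intro r hr
    rw [hgcoeff, symPoly_coeff' n (r + m) (by omega)]
    congr 2
    omega
  have he1 : g.roots.esymm (k - 1) = 0 := by
    have h := (hc 1 (by omega)).symm.trans (hvieta 1 (by omega))
    rw [h1, mul_zero] at h
    have hsign : ((-1:ℝ) ^ (k - 1)) ≠ 0 := by positivity
    rcases mul_eq_zero.1 h.symm with h' | h'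
    · exact absurd h' (by positivity)
    · exact h'
  have hmain := newton_sign_multiset g.roots (by omega) (by rw [hgroots]; exact he1)
  rw [hgroots] at hmain
  -- combine
  have hA := (hc 2 le_rfl).symm.trans (hvieta 2 (by omega))
  have hB := (hc 0 (by omega)).symm.trans (hvieta 0 (by omega))
  rw [Nat.sub_zero] at hB
  simp only [Nat.zero_add] at hB
  have hsign : ((-1:ℝ) ^ (k - 2)) * ((-1:ℝ) ^ k) = 1 := by
    rw [← pow_add]
    exact Even.neg_one_pow ⟨k - 1, by omega⟩
  have hc2pos : (0:ℝ) < ((2 + m).descFactorial m : ℝ) := hdf _ _ (by omega)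
  have hc0pos : (0:ℝ) < ((m).descFactorial m : ℝ) := hdf _ _ le_rfl
  have hAB : (((2 + m).descFactorial m : ℝ) * elemSym n (k - 2) w)
      * ((m.descFactorial m : ℝ) * elemSym n k w)
      = ((n.descFactorial m : ℝ) * (n.descFactorial m : ℝ))
        * (g.roots.esymm (k - 2) * g.roots.esymm k) := by
    rw [hA, hB]
    linear_combination ((n.descFactorial m : ℝ) * (n.descFactorial m : ℝ)
      * g.roots.esymm (k - 2) * g.roots.esymm k) * hsign
  have hABle : (((2 + m).descFactorial m : ℝ) * elemSym n (k - 2) w)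
      * ((m.descFactorial m : ℝ) * elemSym n k w) ≤ 0 := by
    rw [hAB]
    exact mul_nonpos_of_nonneg_of_nonpos (by positivity) hmain
  have hApos : (0:ℝ) < ((2 + m).descFactorial m : ℝ) * elemSym n (k - 2) w :=
    mul_pos hc2pos h2
  have h5 : ((m).descFactorial m : ℝ) * elemSym n k w ≤ 0 := by nlinarith [hApos, hABle]
  nlinarith [hc0pos, h5]

lemma GardingCone_mono (n j k : ℕ) (hjk : j ≤ k) :
    GardingCone n k ⊆ GardingCone n j :=
  fun _ hl m h1 h2 => hl m h1 (h2.trans hjk)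

lemma elemSym_pos_of_nonneg (n j : ℕ) (w : Fin n → ℝ) (hw : ∀ t, 0 ≤ w t)
    (S : Finset (Fin n)) (hS : S.card = j) (hSpos : ∀ t ∈ S, 0 < w t) :
    0 < elemSym n j w := by
  unfold elemSym
  refine Finset.sum_pos' (fun T _ => Finset.prod_nonneg fun t _ => hw t)
    ⟨S, ?_, Finset.prod_pos hSpos⟩
  rw [Finset.mem_powersetCard]
  exact ⟨Finset.subset_univ S, hS⟩

lemma key : ∀ k, 1 ≤ k → ∀ n, k ≤ n → ∀ l, l ∈ GardingCone n k → ∀ i : Fin n,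
    0 < elemSym n (k - 1) (Function.update l i 0) := by
  intro k
  induction k with
  | zero => omega
  | succ k ih =>
    intro _ n hkn l hl i
    rcases Nat.eq_zero_or_pos k with rfl | hk1
    · simpa [elemSym_zero] using one_pos
    by_contra hcon
    push_neg at hcon
    simp only [Nat.add_sub_cancel] at hcon
    set T : ℝ := 1 + ∑ j, |l j| with hTdef
    have habs : ∀ j : Fin n, |l j| ≤ ∑ j', |l j'| :=
      fun j => Finset.single_le_sum (fun j' _ => abs_nonneg (l j')) (Finset.mem_univ j)
    have hTnonneg : (0:ℝ) ≤ T := by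
      have : (0:ℝ) ≤ ∑ j', |l j'| := Finset.sum_nonneg fun j' _ => abs_nonneg _
      linarith
    have hTpos : ∀ j, 0 < l j + T := by
      intro j
      have h1 := habs j
      have h2 := neg_abs_le (l j)
      rw [hTdef]
      linarith
    set gfun : ℝ → ℝ := fun t => elemSym n k (Function.update (fun j => l j + t) i 0)
      with hgdef
    have hgc : Continuous gfun := by
      rw [hgdef]
      unfold elemSym
      apply continuous_finset_sum
      intro S _
      apply continuous_finset_prod
      intro s _
      simp only [Function.update_apply]
      rcases eq_or_ne s i with h | h
      · simp only [h, if_pos rfl]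
        exact continuous_const
      · simp only [if_neg h]
        exact continuous_const.add continuous_id
    have hg0 : gfun 0 ≤ 0 := by
      have hl0 : (fun j => l j + (0:ℝ)) = l := by funext j; ring
      rw [hgdef]
      simpa [hl0] using hcon
    have hgT : 0 < gfun T := by
      have hcard : k ≤ (Finset.univ.erase i).card := by
        rw [Finset.card_erase_of_mem (Finset.mem_univ i), Finset.card_univ, Fintype.card_fin]
        omega
      obtain ⟨S, hSsub, hScard⟩ := Finset.exists_subset_card_eq hcard
      refine elemSym_pos_of_nonneg n k _ ?_ S hScard ?_
      · intro t
        rcases eq_or_ne t i with rfl | h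
        · simp
        · rw [Function.update_of_ne h]
          exact le_of_lt (hTpos t)
      · intro t ht
        have h : t ≠ i := Finset.ne_of_mem_erase (hSsub ht)
        rw [Function.update_of_ne h]
        exact hTpos t
    obtain ⟨t₀, ht₀mem, ht₀⟩ := intermediate_value_Icc hTnonneg hgc.continuousOn
      ⟨hg0, le_of_lt hgT⟩
    set l' : Fin n → ℝ := fun j => l j + t₀ with hl'def
    have hl' : l' ∈ GardingCone n (k+1) :=
      GardingCone_shift n (k+1) (by omega) hkn l hl t₀ ht₀mem.1
    have hw1 : elemSym n k (Function.update l' i 0) = 0 := ht₀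
    have hw2 : 0 < elemSym n (k-1) (Function.update l' i 0) :=
      ih hk1 n (by omega) l' (GardingCone_mono n k (k+1) (by omega) hl') i
    have hw3 : 0 < elemSym n (k+1) (Function.update l' i 0) := by
      have hsplit := elemSym_split n (k+1) (by omega) l' i
      simp only [Nat.add_sub_cancel] at hsplit
      rw [hw1, mul_zero, add_zero] at hsplit
      have hpos := hl' (k+1) (by omega) le_rfl
      linarith [hsplit ▸ hpos]
    have hle := newton_special n (k+1) (by omega) hkn (Function.update l' i 0)
      (by simpa using hw1) (by rwa [show k + 1 - 2 = k - 1 by omega])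
    linarith

/-- for decreasing λ ∈ Γ_k, σ_{k-1;n}(λ) ≥ … ≥ σ_{k-1;1}(λ) > 0. -/
theorem elemSym_update_monotone_pos (n k : ℕ) (hn : 1 ≤ n) (hk : 1 ≤ k) (hkn : k ≤ n)
    (l : Fin n → ℝ) (hl : l ∈ GardingCone n k)
    (hsort : ∀ i j : Fin n, i ≤ j → l j ≤ l i) :
    (∀ i j : Fin n, i ≤ j →
      elemSym n (k - 1) (Function.update l i 0) ≤ elemSym n (k - 1) (Function.update l j 0)) ∧
    0 < elemSym n (k - 1) (Function.update l ⟨0, hn⟩ 0) := by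
  constructor
  · intro i j hij
    rcases eq_or_lt_of_le hij with rfl | hlt
    · exact le_refl _
    have hne : i ≠ j := ne_of_lt hlt
    rcases Nat.lt_or_ge k 2 with hk2 | hk2
    · have : k = 1 := by omega
      subst this
      simp [elemSym_zero]
    -- k ≥ 2
    have hupdmem : Function.update l i 0 ∈ GardingCone n (k-1) := by
      intro m h1 h2
      have := key (m+1) (by omega) n (by omega) l
        (GardingCone_mono n (m+1) k (by omega) hl) i
      simpa using this
    have hA : 0 < elemSym n (k-2) (Function.update (Function.update l i 0) j 0) := by
      have := key (k-1) (by omega) n (by omega) _ hupdmem j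
      rwa [show k - 1 - 1 = k - 2 by omega] at this
    have h1 := elemSym_split n (k-1) (by omega) (Function.update l i 0) j
    have h2 := elemSym_split n (k-1) (by omega) (Function.update l j 0) i
    rw [Function.update_comm hne.symm] at h2
    rw [Function.update_of_ne hne.symm 0 l] at h1
    rw [Function.update_of_ne hne 0 l] at h2
    have hord : l j ≤ l i := hsort i j hij
    have hk12 : k - 1 - 1 = k - 2 := by omega
    rw [hk12] at h1 h2
    nlinarith [h1, h2, hA, hord]
  · exact key k hk n hkn l hl ⟨0, hn⟩
end
end

section
/- (Maclaurin inequality) Let n ≥ 2, 2 ≤ k ≤ n, and let λ ∈ Γ_k. Then (σ_{k-1}(λ)/binom(n,k-1))^{1/(k-1)} ≥ (σ_k(λ)/binom(n,k))^{1/k}. -/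
noncomputable section

open Multiset Polynomial


lemma esymm_zero' (s : Multiset ℝ) : s.esymm 0 = 1 := by
  simp [Multiset.esymm]

lemma esymm_of_card_lt {s : Multiset ℝ} {k : ℕ} (h : Multiset.card s < k) : s.esymm k = 0 := by
  simp [Multiset.esymm, Multiset.powersetCard_eq_empty _ h]

lemma esymm_cons (a : ℝ) (s : Multiset ℝ) (k : ℕ) :
    (a ::ₘ s).esymm (k + 1) = s.esymm (k + 1) + a * s.esymm k := by
  simp only [Multiset.esymm, Multiset.powersetCard_cons, Multiset.map_add, Multiset.sum_add,
    Multiset.map_map, Function.comp_def, Multiset.prod_cons]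
  rw [← Multiset.sum_map_mul_left]

lemma esymm_card (s : Multiset ℝ) : s.esymm (Multiset.card s) = s.prod := by
  induction s using Multiset.induction with
  | empty => simp [Multiset.esymm]
  | cons a t ih =>
    rw [Multiset.card_cons, esymm_cons, esymm_of_card_lt (Nat.lt_succ_self _), ih,
      Multiset.prod_cons, zero_add]

lemma esymm_inv (s : Multiset ℝ) (h : ∀ x ∈ s, x ≠ 0) :
    ∀ i ≤ Multiset.card s, (s.map Inv.inv).esymm i * s.prod = s.esymm (Multiset.card s - i) := by
  induction s using Multiset.induction with
  | empty =>
    intro i hi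
    rw [Multiset.card_zero, Nat.le_zero] at hi
    subst hi; simp [esymm_zero']
  | cons a t ih =>
    intro i hi
    have ha : a ≠ 0 := h a (Multiset.mem_cons_self a t)
    have hainv : a⁻¹ * a = 1 := inv_mul_cancel₀ ha
    have ht : ∀ x ∈ t, x ≠ 0 := fun x hx => h x (Multiset.mem_cons_of_mem hx)
    rcases Nat.eq_zero_or_pos i with rfl | hipos
    · rw [esymm_zero', one_mul, Nat.sub_zero, esymm_card]
    obtain ⟨j, rfl⟩ := Nat.exists_eq_add_of_le hipos  -- i = 1 + j
    rw [Multiset.map_cons, Multiset.prod_cons]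
    rw [Multiset.card_cons] at hi ⊢
    rw [show 1 + j = j + 1 by ring] at hi ⊢
    rw [esymm_cons]
    rcases Nat.lt_or_ge (Multiset.card t) (j + 1) with hlt | hge
    · have hj : j = Multiset.card t := by omega
      subst hj
      rw [esymm_of_card_lt (by simpa using hlt), zero_add, Nat.sub_self, esymm_zero']
      have hE := ih ht (Multiset.card t) le_rfl
      rw [Nat.sub_self, esymm_zero'] at hE
      calc a⁻¹ * (Multiset.map Inv.inv t).esymm (Multiset.card t) * (a * t.prod)
          = (a⁻¹ * a) * ((Multiset.map Inv.inv t).esymm (Multiset.card t) * t.prod) := by ring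
        _ = 1 := by rw [hainv, hE, one_mul]
    · have h1 := ih ht (j + 1) hge
      have h2 := ih ht j (by omega)
      rw [show Multiset.card t + 1 - (j + 1) = (Multiset.card t - (j + 1)) + 1 by omega,
        esymm_cons, show Multiset.card t - j = Multiset.card t - (j + 1) + 1 by omega] at *
      linear_combination a * h1 + h2 + ((Multiset.map Inv.inv t).esymm j * t.prod) * hainv


lemma esymm_of_card_lt' {s : Multiset ℝ} {k : ℕ} (h : Multiset.card s < k) : s.esymm k = 0 := by
  simp [Multiset.esymm, Multiset.powersetCard_eq_empty _ h]

lemma deriv_step (s : Multiset ℝ) (hs : Multiset.card s ≠ 0) :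
    ∃ t : Multiset ℝ, Multiset.card t = Multiset.card s - 1 ∧
      ∀ i, (Multiset.card s : ℝ) * t.esymm i
        = ((Multiset.card s - i : ℕ) : ℝ) * s.esymm i := by
  classical
  set n := Multiset.card s with hn
  set p : Polynomial ℝ := (s.map fun a => X - C a).prod with hp
  have hmonic : p.Monic :=
    monic_multiset_prod_of_monic _ _ (fun a _ => monic_X_sub_C a)
  have hpdeg : p.natDegree = n := by
    rw [hp, natDegree_multiset_prod_X_sub_C_eq_card]
  have hproots : p.roots = s := roots_multiset_prod_X_sub_C s
  set q := derivative p with hq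
  have hqdeglt : q.natDegree < n := hpdeg ▸ natDegree_derivative_lt (hpdeg ▸ hs)
  have hcard : n ≤ Multiset.card q.roots + 1 := by
    have := card_roots_le_derivative p
    rwa [hproots, ← hn] at this
  have hcard' : Multiset.card q.roots ≤ q.natDegree := card_roots' q
  have hqdeg : q.natDegree = n - 1 := by omega
  have hqroots : Multiset.card q.roots = q.natDegree := by omega
  refine ⟨q.roots, by omega, fun i => ?_⟩
  rcases Nat.lt_or_ge (n - 1) i with hlt | hge
  · rw [esymm_of_card_lt' (by omega : Multiset.card q.roots < i)]
    rcases Nat.lt_or_ge i n with h2 | h2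
    · omega
    · rw [Nat.sub_eq_zero_of_le h2]; simp
  · -- i ≤ n - 1
    have hklelhs : (n - 1) - ((n - 1) - i) = i := by omega
    have hlead : q.leadingCoeff = n := by
      rw [leadingCoeff, hqdeg, hq, coeff_derivative,
        show n - 1 + 1 = n by omega, ← hpdeg, ← leadingCoeff, hmonic.leadingCoeff, one_mul]
      rw [Nat.cast_sub (show 1 ≤ p.natDegree by omega), Nat.cast_one]
      ring
    have e1 := Polynomial.coeff_eq_esymm_roots_of_card hqroots
      (show (n - 1) - i ≤ q.natDegree by omega)
    rw [hqdeg, hklelhs, hlead] at e1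
    have e2 := Polynomial.coeff_eq_esymm_roots_of_card
      (show Multiset.card p.roots = p.natDegree by rw [hproots, hpdeg])
      (show (n - 1) - i + 1 ≤ p.natDegree by omega)
    rw [hpdeg, hproots, hmonic.leadingCoeff, one_mul,
      show n - ((n - 1) - i + 1) = i by omega] at e2
    have e3 : q.coeff ((n - 1) - i) = p.coeff ((n - 1) - i + 1) * ((((n - 1) - i : ℕ) : ℝ) + 1) := by
      rw [hq, coeff_derivative]
    rw [e1, e2] at e3
    have hc : ((((n - 1) - i : ℕ) : ℝ) + 1) = ((n - i : ℕ) : ℝ) := by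
      push_cast [Nat.cast_sub (by omega : i ≤ n), Nat.cast_sub (by omega : 1 ≤ n),
        Nat.cast_sub (by omega : i ≤ n - 1)]
      ring
    rw [hc] at e3
    have hsign : ((-1 : ℝ)) ^ i ≠ 0 := by
      apply pow_ne_zero; norm_num
    apply mul_left_cancel₀ hsign
    linear_combination e3

/-- normalized elementary symmetric mean -/
noncomputable def pnorm (s : Multiset ℝ) (i : ℕ) : ℝ :=
  s.esymm i / ((Multiset.card s).choose i : ℝ)

lemma pnorm_zero (s : Multiset ℝ) : pnorm s 0 = 1 := by
  simp [pnorm, esymm_zero']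

lemma pnorm_step (s : Multiset ℝ) (hs : Multiset.card s ≠ 0) :
    ∃ t : Multiset ℝ, Multiset.card t = Multiset.card s - 1 ∧
      ∀ i ≤ Multiset.card s - 1, pnorm t i = pnorm s i := by
  obtain ⟨t, htc, ht⟩ := deriv_step s hs
  refine ⟨t, htc, fun i hi => ?_⟩
  set n := Multiset.card s with hn
  have hchoose : (n - 1).choose i * n = n.choose i * (n - i) := by
    have := Nat.choose_mul_succ_eq (n - 1) i
    rw [show n - 1 + 1 = n by omega] at this
    exact this
  have h1 : (0:ℝ) < (n - 1).choose i := by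
    have : i ≤ n - 1 := hi
    exact_mod_cast Nat.cast_pos.mpr (Nat.choose_pos this)
  have h2 : (0:ℝ) < n.choose i := by
    exact_mod_cast Nat.cast_pos.mpr (Nat.choose_pos (by omega : i ≤ n))
  rw [pnorm, pnorm, htc, ← hn, div_eq_div_iff h1.ne' h2.ne']
  have key := ht i
  have hnne : (n:ℝ) ≠ 0 := by exact_mod_cast hs
  have hchooseR : ((n - 1).choose i : ℝ) * n = (n.choose i : ℝ) * ((n - i : ℕ) : ℝ) := by
    exact_mod_cast congrArg (Nat.cast : ℕ → ℝ) hchoose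
  apply mul_left_cancel₀ hnne
  calc (n:ℝ) * (t.esymm i * ↑(n.choose i)) = ((n:ℝ) * t.esymm i) * ↑(n.choose i) := by ring
    _ = (((n - i : ℕ) : ℝ) * s.esymm i) * ↑(n.choose i) := by rw [key]
    _ = s.esymm i * ((n.choose i : ℝ) * ((n - i : ℕ) : ℝ)) := by ring
    _ = s.esymm i * (((n - 1).choose i : ℝ) * n) := by rw [hchooseR]
    _ = (n:ℝ) * (s.esymm i * ↑((n - 1).choose i)) := by ring

lemma pnorm_iter : ∀ (N : ℕ) (s : Multiset ℝ), Multiset.card s = N →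
    ∀ m ≤ N, ∃ t : Multiset ℝ, Multiset.card t = m ∧ ∀ i ≤ m, pnorm t i = pnorm s i := by
  intro N
  induction N with
  | zero =>
    intro s hs m hm
    exact ⟨s, by omega, fun i hi => rfl⟩
  | succ N ih =>
    intro s hs m hm
    rcases eq_or_lt_of_le hm with rfl | hlt
    · exact ⟨s, hs, fun _ _ => rfl⟩
    · obtain ⟨t', ht'c, ht'⟩ := pnorm_step s (by omega)
      obtain ⟨t, htc, ht⟩ := ih t' (by omega) m (by omega)
      exact ⟨t, htc, fun i hi => (ht i hi).trans (ht' i (by omega))⟩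

lemma quad (s : Multiset ℝ) (h2 : Multiset.card s = 2) : pnorm s 2 ≤ pnorm s 1 ^ 2 := by
  obtain ⟨a, b, rfl⟩ := Multiset.card_eq_two.mp h2
  have e1 : ({a, b} : Multiset ℝ).esymm 1 = a + b := by
    have : ({a, b} : Multiset ℝ) = a ::ₘ {b} := rfl
    rw [this]
    show (a ::ₘ {b}).esymm (0 + 1) = a + b
    rw [esymm_cons]
    have : ({b} : Multiset ℝ).esymm 1 = b := by
      have hb := esymm_card {b}
      simpa using hb
    rw [this, esymm_zero']; ring
  have e2 : ({a, b} : Multiset ℝ).esymm 2 = a * b := by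
    have := esymm_card ({a, b} : Multiset ℝ)
    rw [h2] at this
    simpa using this
  rw [pnorm, pnorm, h2, e1, e2]
  norm_num
  nlinarith [sq_nonneg (a - b)]

lemma newton (s : Multiset ℝ) (j : ℕ) (hj : 1 ≤ j) (hjn : j + 1 ≤ Multiset.card s)
    (hne : s.esymm (j + 1) ≠ 0) :
    pnorm s (j - 1) * pnorm s (j + 1) ≤ pnorm s j ^ 2 := by
  obtain ⟨u, huc, hu⟩ := pnorm_iter (Multiset.card s) s rfl (j + 1) hjn
  have hps : pnorm s (j + 1) ≠ 0 := by
    have hc : (0:ℝ) < (Multiset.card s).choose (j + 1) :=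
      Nat.cast_pos.mpr (Nat.choose_pos hjn)
    simp only [pnorm]
    exact div_ne_zero hne hc.ne'
  have hupnorm : pnorm u (j + 1) = pnorm s (j + 1) := hu (j + 1) le_rfl
  have huprod : u.prod = pnorm u (j + 1) := by
    rw [pnorm, huc, Nat.choose_self, Nat.cast_one, div_one, ← esymm_card u, huc]
  have hune : ∀ x ∈ u, x ≠ 0 := by
    intro x hx hx0
    apply hps
    rw [← hupnorm, ← huprod]
    exact Multiset.prod_eq_zero (hx0 ▸ hx)
  have huprodne : u.prod ≠ 0 := by rw [huprod, hupnorm]; exact hps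
  set v := u.map Inv.inv with hv
  have hvc : Multiset.card v = j + 1 := by rw [hv, Multiset.card_map, huc]
  have key : ∀ i ≤ j + 1, pnorm v i * u.prod = pnorm u (j + 1 - i) := by
    intro i hi
    have hinv := esymm_inv u hune i (by omega)
    rw [huc] at hinv
    have hsym : (j + 1).choose (j + 1 - i) = (j + 1).choose i := Nat.choose_symm hi
    have hcpos : (0:ℝ) < (j + 1).choose i := Nat.cast_pos.mpr (Nat.choose_pos hi)
    rw [pnorm, pnorm, hvc, huc, hsym, div_mul_eq_mul_div, hinv]
  obtain ⟨w, hwc, hw⟩ := pnorm_iter (j + 1) v hvc 2 (by omega)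
  have hquad : pnorm v 2 ≤ pnorm v 1 ^ 2 := by
    rw [← hw 2 le_rfl, ← hw 1 (by omega)]
    exact quad w hwc
  have k1 : pnorm v 1 * u.prod = pnorm u j := by
    have := key 1 (by omega); rwa [show j + 1 - 1 = j by omega] at this
  have k2 : pnorm v 2 * u.prod = pnorm u (j - 1) := by
    have := key 2 (by omega); rwa [show j + 1 - 2 = j - 1 by omega] at this
  have main : pnorm u (j - 1) * pnorm u (j + 1) ≤ pnorm u j ^ 2 := by
    rw [← k2, ← k1, ← huprod]
    have hsq : (0:ℝ) < u.prod ^ 2 := pow_two_pos_of_ne_zero huprodne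
    nlinarith [mul_le_mul_of_nonneg_right hquad hsq.le]
  rw [← hu (j - 1) (by omega), ← hu (j + 1) le_rfl, ← hu j (by omega)]
  exact main

lemma pnorm_pos (s : Multiset ℝ) (i : ℕ) (hi : i ≤ Multiset.card s) (h : 0 < s.esymm i) :
    0 < pnorm s i :=
  div_pos h (Nat.cast_pos.mpr (Nat.choose_pos hi))

lemma maclaurin_core (s : Multiset ℝ) (k : ℕ) (hk : 2 ≤ k) (hkn : k ≤ Multiset.card s)
    (hpos : ∀ i, 1 ≤ i → i ≤ k → 0 < s.esymm i) :
    pnorm s k ^ (k - 1) ≤ pnorm s (k - 1) ^ k := by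
  induction k, hk using Nat.le_induction with
  | base =>
    have h := newton s 1 le_rfl (by omega) (hpos 2 (by omega) le_rfl).ne'
    rw [show (1:ℕ) - 1 = 0 by rfl, pnorm_zero, one_mul] at h
    simpa using h
  | succ k hk2 ih =>
    have ihh := ih (by omega) (fun i h1 h2 => hpos i h1 (by omega))
    have hnewton := newton s k (by omega) (by omega) (hpos (k + 1) (by omega) le_rfl).ne'
    set X := pnorm s (k + 1) with hX
    set Y := pnorm s k with hY
    set Z := pnorm s (k - 1) with hZ
    have hXpos : 0 < X := pnorm_pos s (k + 1) hkn (hpos (k + 1) (by omega) le_rfl)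
    have hYpos : 0 < Y := pnorm_pos s k (by omega) (hpos k (by omega) (by omega))
    have hZpos : 0 < Z := pnorm_pos s (k - 1) (by omega) (hpos (k - 1) (by omega) (by omega))
    -- hnewton : Z * X ≤ Y ^ 2, ihh : Y ^ (k - 1) ≤ Z ^ k
    -- goal : X ^ (k + 1 - 1) ≤ Y ^ (k + 1)
    rw [show k + 1 - 1 = k by omega]
    have step1 : (X * Z) ^ k ≤ (Y ^ 2) ^ k := by
      apply pow_le_pow_left₀ (by positivity)
      nlinarith [hnewton]
    have step2 : (Y ^ 2) ^ k = Y ^ (k + 1) * Y ^ (k - 1) := by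
      rw [← pow_mul, ← pow_add]
      congr 1
      omega
    have step3 : Y ^ (k + 1) * Y ^ (k - 1) ≤ Y ^ (k + 1) * Z ^ k :=
      mul_le_mul_of_nonneg_left ihh (by positivity)
    have : X ^ k * Z ^ k ≤ Y ^ (k + 1) * Z ^ k := by
      calc X ^ k * Z ^ k = (X * Z) ^ k := (mul_pow X Z k).symm
        _ ≤ (Y ^ 2) ^ k := step1
        _ = Y ^ (k + 1) * Y ^ (k - 1) := step2
        _ ≤ Y ^ (k + 1) * Z ^ k := step3
    exact le_of_mul_le_mul_right this (by positivity)

/-- Maclaurin inequality. -/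
theorem maclaurin_inequality (n k : ℕ) (hn : 2 ≤ n) (hk : 2 ≤ k) (hkn : k ≤ n)
    (l : Fin n → ℝ) (hl : l ∈ GardingCone n k) :
    (elemSym n k l / (n.choose k : ℝ)) ^ (1 / (k : ℝ)) ≤
      (elemSym n (k - 1) l / (n.choose (k - 1) : ℝ)) ^ (1 / ((k : ℝ) - 1)) := by
  set s : Multiset ℝ := (Finset.univ : Finset (Fin n)).val.map l with hs
  have hcard : Multiset.card s = n := by
    rw [hs, Multiset.card_map]
    simp
  have hesymm : ∀ j, s.esymm j = elemSym n j l := fun j =>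
    Finset.esymm_map_val l Finset.univ j
  have hpos : ∀ i, 1 ≤ i → i ≤ k → 0 < s.esymm i := fun i h1 h2 => by
    rw [hesymm]; exact hl i h1 h2
  have core := maclaurin_core s k hk (by omega) hpos
  have hpn : ∀ j, pnorm s j = elemSym n j l / (n.choose j : ℝ) := fun j => by
    rw [pnorm, hcard, hesymm]
  rw [hpn, hpn] at core
  set a : ℝ := elemSym n k l / (n.choose k : ℝ) with ha
  set b : ℝ := elemSym n (k - 1) l / (n.choose (k - 1) : ℝ) with hb
  have hapos : 0 < a :=
    div_pos (hl k (by omega) le_rfl) (Nat.cast_pos.mpr (Nat.choose_pos hkn))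
  have hbpos : 0 < b :=
    div_pos (hl (k - 1) (by omega) (by omega)) (Nat.cast_pos.mpr (Nat.choose_pos (by omega)))
  -- core : a ^ (k - 1) ≤ b ^ k  (ℕ powers)
  have hk1 : (1:ℝ) < (k:ℝ) := by
    have : (2:ℝ) ≤ (k:ℝ) := by exact_mod_cast hk
    linarith
  have hkR : (0:ℝ) < (k:ℝ) - 1 := by linarith
  have hkpos : (0:ℝ) < (k:ℝ) := by linarith
  have hcast : ((k - 1 : ℕ) : ℝ) = (k:ℝ) - 1 := by
    rw [Nat.cast_sub (by omega : 1 ≤ k), Nat.cast_one]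
  have core' : a ^ ((k:ℝ) - 1) ≤ b ^ (k:ℝ) := by
    rw [← hcast, Real.rpow_natCast, Real.rpow_natCast]
    exact core
  have e1 : a ^ (1 / (k:ℝ)) = (a ^ ((k:ℝ) - 1)) ^ (1 / ((k:ℝ) * ((k:ℝ) - 1))) := by
    rw [← Real.rpow_mul hapos.le]
    congr 1
    field_simp
  have e2 : b ^ (1 / ((k:ℝ) - 1)) = (b ^ ((k:ℝ))) ^ (1 / ((k:ℝ) * ((k:ℝ) - 1))) := by
    rw [← Real.rpow_mul hbpos.le]
    congr 1
    field_simp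
  rw [e1, e2]
  exact Real.rpow_le_rpow (Real.rpow_nonneg hapos.le _) core' (by positivity)
end
end

section
/- Let n ≥ 1, 1 ≤ k ≤ n, and λ ∈ Γ_k. Then σ_1(λ)/n ≥ (σ_k(λ)/binom(n,k))^{1/k}. -/
noncomputable section

open Polynomial Finset


private lemma reflect_X_sub_C (a : ℝ) : reflect 1 (X - C a) = 1 - C a * X := by
  have h : (X - C a : ℝ[X]) = X + C (-a) * 1 := by rw [map_neg]; ring
  rw [h, reflect_add, reflect_C_mul, reflect_one_X, reflect_one, map_neg, pow_one]
  ring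

lemma reflect_multiset_prod (s : Multiset ℝ) :
    reflect (Multiset.card s) ((s.map fun a => X - C a).prod) =
      (s.map fun a => 1 - C a * X).prod := by
  induction s using Multiset.induction with
  | empty => simp [reflect_one]
  | cons a t ih =>
      rw [Multiset.map_cons, Multiset.map_cons, Multiset.prod_cons, Multiset.prod_cons,
        Multiset.card_cons, add_comm (Multiset.card t) 1,
        reflect_mul _ _ (by simp [natDegree_X_sub_C]) ?_, reflect_X_sub_C, ih]
      calc (t.map fun a => X - C a).prod.natDegree
          ≤ ((t.map fun a => X - C a).map natDegree).sum := natDegree_multiset_prod_le _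
        _ ≤ Multiset.card t := by
            rw [Multiset.map_map]
            simp [natDegree_X_sub_C]

lemma roots_card_reflect (p : ℝ[X]) (h0 : p.coeff 0 ≠ 0)
    (h : Multiset.card p.roots = p.natDegree) :
    Multiset.card (reflect p.natDegree p).roots = p.natDegree := by
  have hp0 : p ≠ 0 := fun hh => h0 (by simp [hh])
  have hlc : p.leadingCoeff ≠ 0 := leadingCoeff_ne_zero.2 hp0
  have hprod := Polynomial.C_leadingCoeff_mul_prod_multiset_X_sub_C (p := p) h
  have hroots_ne : ∀ r ∈ p.roots, r ≠ 0 := by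
    intro r hr hr0
    subst hr0
    have := isRoot_of_mem_roots hr
    rw [IsRoot, ← coeff_zero_eq_eval_zero] at this
    exact h0 this
  have key : reflect p.natDegree p
      = C p.leadingCoeff * ((p.roots.map fun a => 1 - C a * X).prod) := by
    calc reflect p.natDegree p
        = reflect p.natDegree (C p.leadingCoeff * (p.roots.map fun a => X - C a).prod) := by
          rw [hprod]
      _ = C p.leadingCoeff * reflect p.natDegree ((p.roots.map fun a => X - C a).prod) :=
          reflect_C_mul _ _ _
      _ = C p.leadingCoeff * ((p.roots.map fun a => 1 - C a * X).prod) := by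
          rw [← h, reflect_multiset_prod]
  have hfact : (p.roots.map fun a => 1 - C a * X).prod
      = C ((p.roots.map fun r => -r).prod) * ((p.roots.map fun r => X - C r⁻¹).prod) := by
    symm
    rw [map_multiset_prod (C : ℝ →+* ℝ[X]), Multiset.map_map, ← Multiset.prod_map_mul]
    refine congrArg Multiset.prod (Multiset.map_congr rfl ?_)
    intro r hr
    have hrne : (r : ℝ) ≠ 0 := hroots_ne r hr
    have h1 : (C r : ℝ[X]) * C r⁻¹ = 1 := by rw [← C_mul, mul_inv_cancel₀ hrne, C_1]
    simp only [Function.comp_apply]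
    calc (C (-r) : ℝ[X]) * (X - C r⁻¹) = -(C r * X) + C r * C r⁻¹ := by rw [map_neg]; ring
      _ = 1 - C r * X := by rw [h1]; ring
  have hcne : ((p.roots.map fun r => -r).prod : ℝ) ≠ 0 := by
    rw [Ne, Multiset.prod_eq_zero_iff]
    intro hmem
    obtain ⟨r, hr, hr0⟩ := Multiset.mem_map.1 hmem
    exact hroots_ne r hr (by linarith [hr0] )
  have hmm : (p.roots.map fun r => X - C r⁻¹)
      = ((p.roots.map fun r => r⁻¹).map fun a => X - C a) := by
    rw [Multiset.map_map]; rfl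
  rw [key, hfact, ← mul_assoc, ← map_mul,
    roots_C_mul _ (mul_ne_zero hlc hcne), hmm,
    roots_multiset_prod_X_sub_C, Multiset.card_map, h]



lemma card_roots_le_iterate (p : ℝ[X]) (k : ℕ) :
    Multiset.card p.roots ≤ Multiset.card (derivative^[k] p).roots + k := by
  induction k with
  | zero => simp
  | succ m ih =>
      refine ih.trans ?_
      rw [Function.iterate_succ_apply']
      have := Polynomial.card_roots_le_derivative (derivative^[m] p)
      omega


lemma descFact_pos {k m : ℕ} (h : k ≤ m) : 0 < m.descFactorial k := by
  have := Nat.factorial_mul_descFactorial h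
  have h2 := Nat.factorial_pos m
  by_contra h3
  push_neg at h3
  interval_cases hh : m.descFactorial k
  omega

lemma newton_s11 (n j : ℕ) (l : Fin n → ℝ) (h1 : 1 ≤ j) (h2 : j + 1 ≤ n) :
    elemSym n (j-1) l * elemSym n (j+1) l * (n.choose j : ℝ)^2 ≤
      (elemSym n j l)^2 * ((n.choose (j-1) : ℝ) * (n.choose (j+1) : ℝ)) := by
  set σ : ℕ → ℝ := fun m => elemSym n m l with hσdef
  show σ (j-1) * σ (j+1) * (n.choose j : ℝ)^2 ≤
      (σ j)^2 * ((n.choose (j-1) : ℝ) * (n.choose (j+1) : ℝ))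
  -- the polynomial ∏ (X + l i)
  set P : ℝ[X] := ∏ i : Fin n, (X + C (l i)) with hP
  have hPdeg : P.natDegree = n := by
    rw [hP, natDegree_prod_of_monic _ _ (fun i _ => monic_X_add_C _)]
    simp [natDegree_X_add_C]
  have hProots : Multiset.card P.roots = n := by
    have hP2 : P = (((Finset.univ : Finset (Fin n)).val.map fun i => -(l i)).map
        fun a => X - C a).prod := by
      rw [hP, Multiset.map_map, Finset.prod_eq_multiset_prod]
      refine congrArg Multiset.prod (Multiset.map_congr rfl ?_)
      intro i _
      simp [sub_neg_eq_add]
    rw [hP2, roots_multiset_prod_X_sub_C]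
    simp
  have hPcoeff : ∀ m, m ≤ n → P.coeff m = σ (n - m) := by
    intro m hm
    rw [hP, Finset.prod_X_add_C_coeff _ _ (by simpa using hm)]
    simp only [hσdef, elemSym, card_univ, Fintype.card_fin]
  -- first round of derivatives
  set D : ℝ[X] := derivative^[n - j - 1] P with hD
  have hDdeg_le : D.natDegree ≤ j + 1 := by
    have := natDegree_iterate_derivative P (n - j - 1)
    rw [← hD, hPdeg] at this
    omega
  have hDroots : j + 1 ≤ Multiset.card D.roots := by
    have := card_roots_le_iterate P (n - j - 1)
    rw [← hD, hProots] at this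
    omega
  have hDroots_eq : Multiset.card D.roots = j + 1 :=
    le_antisymm (le_trans (card_roots' D) hDdeg_le) hDroots
  have hDdeg : D.natDegree = j + 1 := le_antisymm hDdeg_le (hDroots_eq ▸ card_roots' D)
  have hDcoeff : ∀ m, m ≤ j + 1 → D.coeff m =
      ((m + (n - j - 1)).descFactorial (n - j - 1) : ℝ) * σ (j + 1 - m) := by
    intro m hm
    rw [hD, Polynomial.coeff_iterate_derivative, nsmul_eq_mul,
      hPcoeff (m + (n - j - 1)) (by omega)]
    congr 2
    omega
  by_cases hz : σ (j + 1) = 0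
  · rw [hz]
    have h0 : σ (j-1) * 0 * (n.choose j : ℝ)^2 = 0 := by ring
    rw [h0]
    positivity
  · -- D has nonzero constant coefficient
    have hD0 : D.coeff 0 ≠ 0 := by
      rw [hDcoeff 0 (by omega)]
      have : (0:ℕ) + (n - j - 1) = n - j - 1 := by omega
      rw [this]
      have hpos := descFact_pos (le_refl (n - j - 1))
      have : j + 1 - 0 = j + 1 := by omega
      rw [this]
      positivity
    set R : ℝ[X] := reflect (j+1) D with hR
    have hRroots : Multiset.card R.roots = j + 1 := by
      have h := roots_card_reflect D hD0 (by rw [hDdeg]; exact hDroots_eq)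
      rw [hDdeg] at h
      exact h
    have hRcoeff : ∀ i, i ≤ j + 1 → R.coeff i = D.coeff (j + 1 - i) := by
      intro i hi
      rw [hR, coeff_reflect, revAt_le hi]
    have hRdeg_le : R.natDegree ≤ j + 1 := by
      rw [natDegree_le_iff_coeff_eq_zero]
      intro m hm
      rw [hR, coeff_reflect]
      have hrev : revAt (j+1) m = m := by
        rw [← revAtFun_eq, revAtFun, if_neg (by omega)]
      rw [hrev]
      exact coeff_eq_zero_of_natDegree_lt (by omega)
    have hRdeg : R.natDegree = j + 1 := le_antisymm hRdeg_le (hRroots ▸ card_roots' R)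
    set T : ℝ[X] := derivative^[j-1] R with hT
    have hTdeg : T.natDegree < 3 := by
      have := natDegree_iterate_derivative R (j-1)
      rw [← hT, hRdeg] at this
      omega
    have hTroots : 0 < Multiset.card T.roots := by
      have := card_roots_le_iterate R (j-1)
      rw [← hT, hRroots] at this
      omega
    obtain ⟨x, hx⟩ := Multiset.card_pos_iff_exists_mem.1 hTroots
    have hxr : T.eval x = 0 := isRoot_of_mem_roots hx
    have heval := eval_eq_sum_range' hTdeg x
    rw [hxr] at heval
    have hTc : ∀ m, m ≤ 2 → T.coeff m =
        ((m + (j-1)).descFactorial (j-1) : ℝ) * R.coeff (m + (j-1)) := by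
      intro m hm
      rw [hT, Polynomial.coeff_iterate_derivative, nsmul_eq_mul]
    -- abbreviations
    set a1 : ℝ := ((j+1).descFactorial (j-1) : ℝ) with ha1d
    set a2 : ℝ := ((n-j-1).descFactorial (n-j-1) : ℝ) with ha2d
    set b1 : ℝ := (j.descFactorial (j-1) : ℝ) with hb1d
    set b2 : ℝ := ((n-j).descFactorial (n-j-1) : ℝ) with hb2d
    set g1 : ℝ := ((j-1).descFactorial (j-1) : ℝ) with hg1d
    set g2 : ℝ := ((n-j+1).descFactorial (n-j-1) : ℝ) with hg2d
    have hc0 : T.coeff 0 = g1 * g2 * σ (j-1) := by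
      rw [hTc 0 (by omega)]
      have k0 : (0:ℕ) + (j - 1) = j - 1 := by omega
      rw [k0, hRcoeff (j-1) (by omega)]
      have k1 : j + 1 - (j - 1) = 2 := by omega
      rw [k1, hDcoeff 2 (by omega)]
      have k2 : (2:ℕ) + (n - j - 1) = n - j + 1 := by omega
      have k3 : j + 1 - 2 = j - 1 := by omega
      rw [k2, k3]
      ring
    have hc1 : T.coeff 1 = b1 * b2 * σ j := by
      rw [hTc 1 (by omega)]
      have k0 : (1:ℕ) + (j - 1) = j := by omega
      rw [k0, hRcoeff j (by omega)]
      have k1 : j + 1 - j = 1 := by omega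
      rw [k1, hDcoeff 1 (by omega)]
      have k2 : (1:ℕ) + (n - j - 1) = n - j := by omega
      have k3 : j + 1 - 1 = j := by omega
      rw [k2, k3]
      ring
    have hc2 : T.coeff 2 = a1 * a2 * σ (j+1) := by
      rw [hTc 2 (by omega)]
      have k0 : (2:ℕ) + (j - 1) = j + 1 := by omega
      rw [k0, hRcoeff (j+1) (by omega)]
      have k1 : j + 1 - (j + 1) = 0 := by omega
      rw [k1, hDcoeff 0 (by omega)]
      have k2 : (0:ℕ) + (n - j - 1) = n - j - 1 := by omega
      have k3 : j + 1 - 0 = j + 1 := by omega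
      rw [k2, k3]
      ring
    rw [Finset.sum_range_succ, Finset.sum_range_succ, Finset.sum_range_one,
      hc0, hc1, hc2] at heval
    -- heval : 0 = g1*g2*σ(j-1) * x^0 + b1*b2*σj * x^1 + a1*a2*σ(j+1) * x^2
    have hkey : (b1*b2*σ j)^2 - 4*((a1*a2*σ (j+1))*(g1*g2*σ (j-1)))
        = (2*(a1*a2*σ (j+1))*x + b1*b2*σ j)^2 := by
      linear_combination (4*(a1*a2*σ (j+1))) * heval
    have hdisc : 4 * ((a1*a2*σ (j+1)) * (g1*g2*σ (j-1))) ≤ (b1*b2*σ j)^2 := by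
      have := sq_nonneg (2*(a1*a2*σ (j+1))*x + b1*b2*σ j)
      linarith
    -- numeric identities
    have hb1 : j.descFactorial (j-1) = j.factorial := by
      have h := Nat.factorial_mul_descFactorial (show j - 1 ≤ j by omega)
      have e : j - (j-1) = 1 := by omega
      rw [e] at h
      simpa using h
    have hb2 : (n-j).descFactorial (n-j-1) = (n-j).factorial := by
      have h := Nat.factorial_mul_descFactorial (show n - j - 1 ≤ n - j by omega)
      have e : n - j - (n-j-1) = 1 := by omega
      rw [e] at h
      simpa using h
    have ha1 : 2 * (j+1).descFactorial (j-1) = (j+1).factorial := by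
      have h := Nat.factorial_mul_descFactorial (show j - 1 ≤ j + 1 by omega)
      have e : j + 1 - (j-1) = 2 := by omega
      rw [e] at h
      simpa [Nat.factorial] using h
    have hg2' : 2 * (n-j+1).descFactorial (n-j-1) = (n-j+1).factorial := by
      have h := Nat.factorial_mul_descFactorial (show n - j - 1 ≤ n - j + 1 by omega)
      have e : n - j + 1 - (n-j-1) = 2 := by omega
      rw [e] at h
      simpa [Nat.factorial] using h
    have ha2 : (n-j-1).descFactorial (n-j-1) = (n-j-1).factorial := Nat.descFactorial_self _
    have hg1 : (j-1).descFactorial (j-1) = (j-1).factorial := Nat.descFactorial_self _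
    have hcj : n.choose j * j.factorial * (n-j).factorial = n.factorial :=
      Nat.choose_mul_factorial_mul_factorial (by omega)
    have hcm : n.choose (j-1) * (j-1).factorial * (n-j+1).factorial = n.factorial := by
      have h := Nat.choose_mul_factorial_mul_factorial (show j - 1 ≤ n by omega)
      have e : n - (j-1) = n - j + 1 := by omega
      rw [e] at h
      exact h
    have hcp : n.choose (j+1) * (j+1).factorial * (n-j-1).factorial = n.factorial := by
      have h := Nat.choose_mul_factorial_mul_factorial (show j + 1 ≤ n by omega)
      have e : n - (j+1) = n - j - 1 := by omega
      rw [e] at h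
      exact h
    -- real versions
    have e1 : (b1*b2) * (n.choose j : ℝ) = (n.factorial : ℝ) := by
      rw [hb1d, hb2d, hb1, hb2]
      push_cast [← hcj]
      ring
    have e2 : 4 * (a1*a2*g1*g2) * ((n.choose (j-1) : ℝ) * (n.choose (j+1) : ℝ))
        = (n.factorial : ℝ)^2 := by
      rw [ha1d, ha2d, hg1d, hg2d, ha2, hg1]
      have c1 : ((j+1).descFactorial (j-1) : ℝ) = ((j+1).factorial : ℝ) / 2 := by
        field_simp
        exact_mod_cast (by omega : (j+1).descFactorial (j-1) * 2 = (j+1).factorial)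
      have c2 : ((n-j+1).descFactorial (n-j-1) : ℝ) = ((n-j+1).factorial : ℝ) / 2 := by
        field_simp
        exact_mod_cast (by omega : (n-j+1).descFactorial (n-j-1) * 2 = (n-j+1).factorial)
      rw [c1, c2]
      have : ((n.factorial : ℝ))^2 = ((n.choose (j-1) * (j-1).factorial * (n-j+1).factorial : ℕ) : ℝ)
          * ((n.choose (j+1) * (j+1).factorial * (n-j-1).factorial : ℕ) : ℝ) := by
        rw [hcm, hcp]
        push_cast
        ring
      rw [this]
      push_cast
      ring
    have hKpos : 0 < a1*a2*g1*g2 := by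
      rw [ha1d, ha2d, hg1d, hg2d]
      have p1 := descFact_pos (show j - 1 ≤ j + 1 by omega)
      have p2 := descFact_pos (le_refl (n-j-1))
      have p3 := descFact_pos (le_refl (j-1))
      have p4 := descFact_pos (show n - j - 1 ≤ n - j + 1 by omega)
      positivity
    have hmain : 4*(a1*a2*g1*g2) * (σ (j-1) * σ (j+1) * (n.choose j : ℝ)^2)
        ≤ 4*(a1*a2*g1*g2) * ((σ j)^2 * ((n.choose (j-1) : ℝ) * (n.choose (j+1) : ℝ))) := by
      calc 4*(a1*a2*g1*g2) * (σ (j-1) * σ (j+1) * (n.choose j : ℝ)^2)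
          = (4 * ((a1*a2*σ (j+1)) * (g1*g2*σ (j-1)))) * (n.choose j : ℝ)^2 := by ring
        _ ≤ (b1*b2*σ j)^2 * (n.choose j : ℝ)^2 :=
            mul_le_mul_of_nonneg_right hdisc (sq_nonneg _)
        _ = ((b1*b2) * (n.choose j : ℝ))^2 * (σ j)^2 := by ring
        _ = (n.factorial : ℝ)^2 * (σ j)^2 := by rw [e1]
        _ = (4 * (a1*a2*g1*g2) * ((n.choose (j-1) : ℝ) * (n.choose (j+1) : ℝ))) * (σ j)^2 := by
            rw [e2]
        _ = 4*(a1*a2*g1*g2) * ((σ j)^2 * ((n.choose (j-1) : ℝ) * (n.choose (j+1) : ℝ))) := by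
            ring
    exact le_of_mul_le_mul_left hmain (by positivity)

/-- σ₁(λ)/n ≥ (σ_k(λ)/binom(n,k))^{1/k} on Γ_k. -/
theorem maclaurin_first (n k : ℕ) (hn : 1 ≤ n) (hk : 1 ≤ k) (hkn : k ≤ n)
    (l : Fin n → ℝ) (hl : l ∈ GardingCone n k) :
    (elemSym n k l / (n.choose k : ℝ)) ^ (1 / (k : ℝ)) ≤ elemSym n 1 l / (n : ℝ) := by
  have hσ0 : elemSym n 0 l = 1 := by simp [elemSym]
  set p : ℕ → ℝ := fun m => elemSym n m l / (n.choose m : ℝ) with hp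
  have hchoosepos : ∀ m, m ≤ n → (0:ℝ) < (n.choose m : ℝ) := fun m hm => by
    exact_mod_cast Nat.choose_pos hm
  have hppos : ∀ m, m ≤ k → 0 < p m := by
    intro m hm
    rcases Nat.eq_zero_or_pos m with h|h
    · subst h
      rw [hp]
      simp [hσ0]
    · exact div_pos (hl m h hm) (hchoosepos m (le_trans hm hkn))
  have hstep : ∀ m, m + 1 ≤ k → p (m+1) ≤ p m * p 1 := by
    intro m
    induction m with
    | zero =>
        intro _
        have : p 0 = 1 := by rw [hp]; simp [hσ0]
        rw [this, one_mul]
    | succ i ih =>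
        intro hik
        have hpi : 0 < p i := hppos i (by omega)
        have hpi1 : 0 < p (i+1) := hppos (i+1) (by omega)
        have hN := newton_s11 n (i+1) l (by omega) (by omega)
        have hsub : (i+1) - 1 = i := by omega
        rw [hsub] at hN
        have hpform : p i * p (i+2) ≤ p (i+1)^2 := by
          rw [hp]
          simp only []
          rw [div_mul_div_comm, div_pow]
          rw [div_le_div_iff₀ (mul_pos (hchoosepos i (by omega)) (hchoosepos (i+2) (by omega)))
            (pow_pos (hchoosepos (i+1) (by omega)) 2)]
          have h22 : i + 1 + 1 = i + 2 := rfl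
          rw [h22] at hN
          exact hN
        have ih' := ih (by omega)
        have h3 : p i * p (i+2) ≤ p i * (p (i+1) * p 1) := by
          have h4 : p (i+1) * p (i+1) ≤ (p i * p 1) * p (i+1) :=
            mul_le_mul_of_nonneg_right ih' hpi1.le
          nlinarith [hpform]
        have := le_of_mul_le_mul_left h3 hpi
        have h22 : i + 1 + 1 = i + 2 := rfl
        rw [h22]
        exact this
  have hp1 : 0 < p 1 := hppos 1 hk
  have hpow : ∀ m, m ≤ k → p m ≤ p 1 ^ m := by
    intro m
    induction m with
    | zero =>
        intro _
        rw [hp]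
        simp [hσ0]
    | succ i ih =>
        intro him
        calc p (i+1) ≤ p i * p 1 := hstep i him
          _ ≤ p 1 ^ i * p 1 := mul_le_mul_of_nonneg_right (ih (by omega)) hp1.le
          _ = p 1 ^ (i+1) := by ring
  have hpk : 0 < p k := hppos k le_rfl
  have hfin : (p k) ^ (1 / (k:ℝ)) ≤ p 1 := by
    calc (p k) ^ (1 / (k:ℝ)) ≤ (p 1 ^ k) ^ (1 / (k:ℝ)) :=
          Real.rpow_le_rpow hpk.le (hpow k le_rfl) (by positivity)
      _ = p 1 := by
          rw [← Real.rpow_natCast (p 1) k, ← Real.rpow_mul hp1.le, mul_one_div,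
            div_self (show (k:ℝ) ≠ 0 from Nat.cast_ne_zero.mpr (by omega)),
            Real.rpow_one]
  have hp1eq : p 1 = elemSym n 1 l / (n : ℝ) := by
    rw [hp]
    simp [Nat.choose_one_right]
  rw [← hp1eq]
  exact hfin
end
end

section
/- For n ≥ 2 and 1 ≤ k ≤ n define w_k on ℝ^n∖{0} by: w_k(x) = |x|^{2-n/k} if 2k > n; w_k(x) = log|x| if 2k = n; and w_k(x) = −|x|^{2-n/k} if 2k < n. Then w_k is smooth on ℝ^n∖{0}, and for every x ≠ 0 the eigenvalue vector λ = λ(D²w_k(x)) of the Hessian of w_k at x satisfies σ_j(λ) > 0 for all 1 ≤ j ≤ k−1 and σ_k(λ) = 0. In particular, w_k is k-admissible on ℝ^n∖{0} and solves the homogeneous k-Hessian equation S_k(D²w_k) = 0 there. -/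
noncomputable section

/-- S_k(A) = σ_k(λ(A)): the k-th elementary symmetric function of the eigenvalues of a
real symmetric matrix (junk value 0 if A is not symmetric). -/
def SkEig (n k : ℕ) (A : Matrix (Fin n) (Fin n) ℝ) : ℝ :=
  if h : A.IsHermitian then elemSym n k h.eigenvalues else 0

/-- The Hessian matrix of u : ℝⁿ → ℝ at x, with entries ∂ᵢ∂ⱼu(x). -/
def hessianMatrix (n : ℕ) (u : EuclideanSpace ℝ (Fin n) → ℝ)
    (x : EuclideanSpace ℝ (Fin n)) : Matrix (Fin n) (Fin n) ℝ :=
  fun i j => fderiv ℝ (fun y => fderiv ℝ u y (EuclideanSpace.single j (1 : ℝ))) x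
    (EuclideanSpace.single i (1 : ℝ))

/-!
In each of the three regimes the fundamental solution is radial, `w x = h (‖x‖ ^ 2)` with
`h' s = c * s ^ (-n / (2k))` and `c > 0`. Hence `D²w(x) = d • 1 + a • x xᵀ` with
`d = 2 h'(‖x‖²) > 0`; its eigenvalues are `d`, with multiplicity `n - 1`, and
`ν = d + a ‖x‖²`, and the homogeneity exponent `-n / (2k)` is exactly what makes
`k ν = (k - n) d`. For such a spectrum `j k σ_j = n (k - j) C(n-1, j-1) d ^ j`, which is
positive for `j < k` and vanishes for `j = k`.
-/

open Matrix

theorem Multiset.esymm_cons_succ {R : Type*} [CommSemiring R] (a : R) (s : Multiset R) (j : ℕ) :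
    (a ::ₘ s).esymm (j + 1) = s.esymm (j + 1) + a * s.esymm j := by
  simp only [esymm, powersetCard_cons, map_add, sum_add, map_map, Function.comp_def, prod_cons,
    sum_map_mul_left]

theorem Multiset.esymm_replicate {R : Type*} [CommSemiring R] (m j : ℕ) (a : R) :
    (replicate m a).esymm j = m.choose j * a ^ j := by
  induction m generalizing j with
  | zero => cases j <;> simp [esymm, powersetCard_zero_right]
  | succ m ih =>
    cases j with
    | zero => simp [esymm]
    | succ j =>
      rw [replicate_succ, esymm_cons_succ, ih, ih, Nat.choose_succ_succ]
      push_cast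
      ring

theorem Multiset.mul_esymm_cons_replicate {R : Type*} [CommRing R] {m j : ℕ} (hj : j ≤ m)
    {k μ ν : R} (hν : k * ν = (k - (m + 1)) * μ) :
    (j + 1) * k * (ν ::ₘ replicate m μ).esymm (j + 1)
      = (m + 1) * (k - (j + 1)) * m.choose j * μ ^ (j + 1) := by
  have hchoose : (m.choose (j + 1) : R) * (j + 1) = m.choose j * (m - j) := by
    rw [← Nat.cast_sub hj]
    exact_mod_cast congrArg (Nat.cast : ℕ → R) (Nat.choose_succ_right_eq m j)
  rw [esymm_cons_succ, esymm_replicate, esymm_replicate]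
  linear_combination (k * μ ^ (j + 1)) * hchoose + ((j + 1) * m.choose j * μ ^ j) * hν

open Polynomial in
theorem Matrix.charpoly_scalar_add_vecMulVec {R n : Type*} [CommRing R] [Fintype n]
    [DecidableEq n] [Nonempty n] (d : R) (u v : n → R) :
    (scalar n d + vecMulVec u v).charpoly
      = (X - C d) ^ (Fintype.card n - 1) * (X - C (d + u ⬝ᵥ v)) := by
  have hshift := charpoly_sub_scalar (vecMulVec u v) (-d)
  rw [map_neg, sub_neg_eq_add, add_comm] at hshift
  have hcard : Fintype.card n = Fintype.card n - 1 + 1 :=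
    (Nat.sub_add_cancel Fintype.card_pos).symm
  rw [hshift, charpoly_vecMulVec, hcard, Nat.add_sub_cancel, smul_eq_C_mul]
  simp only [sub_comp, pow_comp, mul_comp, X_comp, C_comp, map_neg, map_add, ← sub_eq_add_neg]
  ring

theorem Matrix.IsHermitian.map_eigenvalues_of_eq_scalar_add_vecMulVec {n : Type*} [Fintype n]
    [DecidableEq n] [Nonempty n] {A : Matrix n n ℝ} (hA : A.IsHermitian) {d : ℝ}
    {u v : n → ℝ} (h : A = scalar n d + vecMulVec u v) :
    Finset.univ.val.map hA.eigenvalues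
      = (d + u ⬝ᵥ v) ::ₘ Multiset.replicate (Fintype.card n - 1) d := by
  have hroots : A.charpoly.roots
      = (d + u ⬝ᵥ v) ::ₘ Multiset.replicate (Fintype.card n - 1) d := by
    rw [h, charpoly_scalar_add_vecMulVec, Polynomial.roots_mul, Polynomial.roots_pow,
      Polynomial.roots_X_sub_C, Polynomial.roots_X_sub_C, Multiset.nsmul_singleton, add_comm,
      Multiset.singleton_add]
    exact mul_ne_zero (pow_ne_zero _ (Polynomial.X_sub_C_ne_zero d))
      (Polynomial.X_sub_C_ne_zero _)
  simpa [hA.roots_charpoly_eq_eigenvalues] using hroots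

theorem Matrix.isHermitian_scalar_add_vecMulVec_smul {n : Type*} [Fintype n] [DecidableEq n]
    (d a : ℝ) (u : n → ℝ) : (scalar n d + vecMulVec (a • u) u).IsHermitian := by
  ext i j
  simp [vecMulVec_apply, diagonal_apply, eq_comm (a := i), mul_comm]

theorem elemSym_eq_esymm (n j : ℕ) (l : Fin n → ℝ) :
    elemSym n j l = (Finset.univ.val.map l).esymm j :=
  (Finset.esymm_map_val l Finset.univ j).symm

theorem elemSym_eigenvalues_of_eq_scalar_add_vecMulVec {n : ℕ}
    {A : Matrix (Fin n) (Fin n) ℝ} (hA : A.IsHermitian) {d k : ℝ} {u v : Fin n → ℝ}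
    (h : A = scalar (Fin n) d + vecMulVec u v) (hν : k * (d + u ⬝ᵥ v) = (k - n) * d)
    {j : ℕ} (hj : j < n) :
    (j + 1) * k * elemSym n (j + 1) hA.eigenvalues
      = n * (k - (j + 1)) * (n - 1).choose j * d ^ (j + 1) := by
  obtain ⟨m, rfl⟩ : ∃ m, n = m + 1 := ⟨n - 1, by omega⟩
  rw [elemSym_eq_esymm, hA.map_eigenvalues_of_eq_scalar_add_vecMulVec h, Fintype.card_fin,
    Nat.add_sub_cancel]
  push_cast at hν ⊢
  exact Multiset.mul_esymm_cons_replicate (by omega) hν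

theorem EuclideanSpace.dotProduct_self {ι : Type*} [Fintype ι] (x : EuclideanSpace ℝ ι) :
    ⇑x ⬝ᵥ ⇑x = ‖x‖ ^ 2 := by
  rw [← real_inner_self_eq_norm_sq, EuclideanSpace.inner_eq_star_dotProduct]
  simp

theorem hasFDerivAt_comp_norm_sq {E : Type*} [NormedAddCommGroup E] [InnerProductSpace ℝ E]
    {h h' : ℝ → ℝ} {y : E} (hd : HasDerivAt h (h' (‖y‖ ^ 2)) (‖y‖ ^ 2)) :
    HasFDerivAt (fun z => h (‖z‖ ^ 2)) ((2 * h' (‖y‖ ^ 2)) • innerSL ℝ y) y :=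
  (hd.comp_hasFDerivAt y (hasStrictFDerivAt_norm_sq y).hasFDerivAt).congr_fderiv (by module)

section Radial

variable {n : ℕ} {h h' : ℝ → ℝ}

theorem hessianMatrix_comp_norm_sq {h'' : ℝ → ℝ} (hd : ∀ s > 0, HasDerivAt h (h' s) s)
    (hd' : ∀ s > 0, HasDerivAt h' (h'' s) s) {x : EuclideanSpace ℝ (Fin n)} (hx : x ≠ 0) :
    hessianMatrix n (fun y => h (‖y‖ ^ 2)) x
      = scalar (Fin n) (2 * h' (‖x‖ ^ 2)) + vecMulVec ((4 * h'' (‖x‖ ^ 2)) • ⇑x) ⇑x := by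
  have hpartial : ∀ j : Fin n,
      (fun y => fderiv ℝ (fun z => h (‖z‖ ^ 2)) y (EuclideanSpace.single j 1))
        =ᶠ[nhds x] fun y => 2 * h' (‖y‖ ^ 2) * y j := by
    intro j
    filter_upwards [isOpen_compl_singleton.mem_nhds hx] with y hy
    rw [(hasFDerivAt_comp_norm_sq (hd _ (by positivity))).fderiv]
    simp [EuclideanSpace.inner_single_right]
  have hcoeff : HasFDerivAt (fun y => 2 * h' (‖y‖ ^ 2))
      ((2 : ℝ) • (2 * h'' (‖x‖ ^ 2)) • innerSL ℝ x) x :=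
    (hasFDerivAt_comp_norm_sq (hd' _ (by positivity))).const_mul 2
  ext i j
  have hprod : HasFDerivAt (fun y : EuclideanSpace ℝ (Fin n) => 2 * h' (‖y‖ ^ 2) * y j)
      ((2 * h' (‖x‖ ^ 2)) • EuclideanSpace.proj j
        + x j • (2 : ℝ) • (2 * h'' (‖x‖ ^ 2)) • innerSL ℝ x) x :=
    hcoeff.fun_mul (EuclideanSpace.proj (𝕜 := ℝ) j).hasFDerivAt
  rw [hessianMatrix, (hpartial j).fderiv_eq, hprod.fderiv]
  simp [EuclideanSpace.inner_single_right, diagonal_apply, vecMulVec_apply, eq_comm (a := j)]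
  ring

theorem hessianMatrix_comp_norm_sq_of_hasDerivAt_rpow {c p : ℝ}
    (hd : ∀ s > 0, HasDerivAt h (c * s ^ (-p)) s) {x : EuclideanSpace ℝ (Fin n)} (hx : x ≠ 0) :
    hessianMatrix n (fun y => h (‖y‖ ^ 2)) x
      = scalar (Fin n) (2 * c * (‖x‖ ^ 2) ^ (-p))
        + vecMulVec ((-4 * c * p * (‖x‖ ^ 2) ^ (-p - 1)) • ⇑x) ⇑x := by
  rw [hessianMatrix_comp_norm_sq hd
    (fun s hs => (Real.hasDerivAt_rpow_const (Or.inl hs.ne')).const_mul c) hx]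
  congr 1
  · congr 1; ring
  · congr 2; ring

end Radial

theorem hasDerivAt_rpow_one_sub (p : ℝ) {s : ℝ} (hs : 0 < s) :
    HasDerivAt (fun t => t ^ (1 - p)) ((1 - p) * s ^ (-p)) s := by
  simpa using Real.hasDerivAt_rpow_const (p := 1 - p) (Or.inl hs.ne')

def kHessianFundamentalSolution (n k : ℕ) (x : EuclideanSpace ℝ (Fin n)) : ℝ :=
  if n < 2 * k then ‖x‖ ^ (2 - (n : ℝ) / k)
  else if n = 2 * k then Real.log ‖x‖
  else -‖x‖ ^ (2 - (n : ℝ) / k)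

section FundamentalSolution

variable {n k : ℕ}

theorem contDiffOn_kHessianFundamentalSolution :
    ContDiffOn ℝ (⊤ : ℕ∞) (kHessianFundamentalSolution n k) {x | x ≠ 0} := by
  intro x hx
  have hnorm := contDiffAt_norm ℝ (n := (⊤ : ℕ∞)) hx
  have hpos : ‖x‖ ≠ 0 := norm_ne_zero_iff.mpr hx
  refine ContDiffAt.contDiffWithinAt ?_
  unfold kHessianFundamentalSolution
  split_ifs
  · exact (Real.contDiffAt_rpow_const_of_ne hpos).comp x hnorm
  · exact (Real.contDiffAt_log.mpr hpos).comp x hnorm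
  · exact ((Real.contDiffAt_rpow_const_of_ne hpos).comp x hnorm).neg

theorem exists_profile_kHessianFundamentalSolution (hk : 0 < k) :
    ∃ h : ℝ → ℝ, ∃ c > 0, (∀ y, kHessianFundamentalSolution n k y = h (‖y‖ ^ 2)) ∧
      ∀ s > 0, HasDerivAt h (c * s ^ (-((n : ℝ) / (2 * k)))) s := by
  set p : ℝ := n / (2 * k)
  have hk' : (0 : ℝ) < k := by exact_mod_cast hk
  have hrpow : ∀ y : EuclideanSpace ℝ (Fin n),
      ‖y‖ ^ (2 - (n : ℝ) / k) = (‖y‖ ^ 2) ^ (1 - p) := by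
    intro y
    rw [← Real.rpow_natCast, ← Real.rpow_mul (norm_nonneg y)]
    congr 1
    simp only [p]
    field_simp
    ring
  unfold kHessianFundamentalSolution
  split_ifs with hlt heq
  · refine ⟨fun s => s ^ (1 - p), 1 - p, ?_, hrpow, fun s hs => hasDerivAt_rpow_one_sub p hs⟩
    rw [gt_iff_lt, sub_pos, div_lt_one (by positivity)]
    exact_mod_cast hlt
  · refine ⟨fun s => Real.log s / 2, 1 / 2, by norm_num, fun y => ?_, fun s hs => ?_⟩
    · show Real.log ‖y‖ = Real.log (‖y‖ ^ 2) / 2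
      rw [Real.log_pow]
      push_cast
      ring
    · have hp : p = 1 := by
        simp only [p, heq]
        push_cast
        field_simp
      rw [hp, Real.rpow_neg_one]
      exact ((Real.hasDerivAt_log hs.ne').div_const 2).congr_deriv (by ring)
  · refine ⟨fun s => -s ^ (1 - p), p - 1, ?_, fun y => by rw [hrpow], fun s hs => ?_⟩
    · rw [gt_iff_lt, sub_pos, one_lt_div (by positivity)]
      exact_mod_cast (by omega : 2 * k < n)
    · exact (hasDerivAt_rpow_one_sub p hs).fun_neg.congr_deriv (by ring)

theorem hessianMatrix_kHessianFundamentalSolution (hk : 0 < k) {x : EuclideanSpace ℝ (Fin n)}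
    (hx : x ≠ 0) :
    ∃ d > 0, ∃ a : ℝ,
      hessianMatrix n (kHessianFundamentalSolution n k) x
          = scalar (Fin n) d + vecMulVec (a • ⇑x) ⇑x ∧
        k * (d + (a • ⇑x) ⬝ᵥ ⇑x) = (k - n) * d := by
  obtain ⟨h, c, hc, hwh, hd⟩ := exists_profile_kHessianFundamentalSolution (n := n) hk
  rw [show kHessianFundamentalSolution n k = fun y => h (‖y‖ ^ 2) from funext hwh,
    hessianMatrix_comp_norm_sq_of_hasDerivAt_rpow hd hx]
  refine ⟨_, by positivity, _, rfl, ?_⟩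
  have hs : ‖x‖ ^ 2 ≠ 0 := by positivity
  have hk' : (k : ℝ) ≠ 0 := by positivity
  rw [smul_dotProduct, EuclideanSpace.dotProduct_self, smul_eq_mul, Real.rpow_sub_one hs]
  field_simp
  ring

end FundamentalSolution

theorem fundamental_solution_kHessian_general (n k : ℕ) (hk : 1 ≤ k) (hkn : k ≤ n)
    (w : EuclideanSpace ℝ (Fin n) → ℝ)
    (hw : w = fun x => if n < 2 * k then ‖x‖ ^ (2 - (n : ℝ) / (k : ℝ))
        else if n = 2 * k then Real.log ‖x‖
        else -‖x‖ ^ (2 - (n : ℝ) / (k : ℝ))) :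
    ContDiffOn ℝ (⊤ : ℕ∞) w {x | x ≠ 0} ∧
    ∀ x : EuclideanSpace ℝ (Fin n), x ≠ 0 →
      ∃ hH : (hessianMatrix n w x).IsHermitian,
        (∀ j, 1 ≤ j → j ≤ k - 1 → 0 < elemSym n j hH.eigenvalues) ∧
        elemSym n k hH.eigenvalues = 0 := by
  obtain rfl : w = kHessianFundamentalSolution n k := hw
  refine ⟨contDiffOn_kHessianFundamentalSolution, fun x hx => ?_⟩
  obtain ⟨d, hd, a, hH, hν⟩ := hessianMatrix_kHessianFundamentalSolution hk hx
  have hsymm : (hessianMatrix n (kHessianFundamentalSolution n k) x).IsHermitian :=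
    hH ▸ isHermitian_scalar_add_vecMulVec_smul d a ⇑x
  have hσ := fun j (hj : j < n) => elemSym_eigenvalues_of_eq_scalar_add_vecMulVec hsymm hH hν hj
  refine ⟨hsymm, fun j hj hjk => ?_, ?_⟩
  · obtain ⟨i, rfl⟩ := Nat.exists_eq_add_of_le' hj
    have hki : (0 : ℝ) < k - (i + 1) := by
      rw [sub_pos]
      exact_mod_cast (by omega : i + 1 < k)
    have hn : 0 < n := by omega
    have hchoose := Nat.choose_pos (by omega : i ≤ n - 1)
    refine pos_of_mul_pos_right (a := (i + 1) * (k : ℝ)) ?_ (by positivity)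
    rw [hσ i (by omega)]
    positivity
  · obtain ⟨i, rfl⟩ := Nat.exists_eq_add_of_le' hk
    have hσk := hσ i (by omega)
    push_cast at hσk
    simpa [Nat.cast_add_one_ne_zero] using hσk

/-- the fundamental solution w_k of the k-Hessian equation is smooth away
from the origin, its Hessian eigenvalues satisfy σ_j > 0 for 1 ≤ j ≤ k-1 and σ_k = 0; in
particular it is k-admissible and solves S_k(D²w_k) = 0 on ℝⁿ∖{0}. -/
theorem fundamental_solution_kHessian (n k : ℕ) (hn : 2 ≤ n) (hk : 1 ≤ k) (hkn : k ≤ n)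
    (w : EuclideanSpace ℝ (Fin n) → ℝ)
    (hw : w = fun x => if n < 2 * k then ‖x‖ ^ (2 - (n : ℝ) / (k : ℝ))
        else if n = 2 * k then Real.log ‖x‖
        else -‖x‖ ^ (2 - (n : ℝ) / (k : ℝ))) :
    ContDiffOn ℝ (⊤ : ℕ∞) w {x | x ≠ 0} ∧
    ∀ x : EuclideanSpace ℝ (Fin n), x ≠ 0 →
      ∃ hH : (hessianMatrix n w x).IsHermitian,
        (∀ j, 1 ≤ j → j ≤ k - 1 → 0 < elemSym n j hH.eigenvalues) ∧
        elemSym n k hH.eigenvalues = 0 :=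
  fundamental_solution_kHessian_general n k hk hkn w hw
end
end
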